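/- arXiv:1010.4058 — 3 statements merged into one kernel-verified Lean document; each statement's English description precedes it below -/
import Mathlib

section
/- The center of the group H_{2,2} equals {1, -1}, where 1 is the 4×4 identity matrix. -/
open Matrix

/-- σ₁ : (x,y,z,w) ↦ (z,w,x,y) -/
def sigma1m : Matrix (Fin 4) (Fin 4) ℂ :=
  !![0,0,1,0; 0,0,0,1; 1,0,0,0; 0,1,0,0]

/-- σ₂ : (x,y,z,w) ↦ (y,x,w,z) -/
def sigma2m : Matrix (Fin 4) (Fin 4) ℂ :=
  !![0,1,0,0; 1,0,0,0; 0,0,0,1; 0,0,1,0]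

/-- τ₁ : (x,y,z,w) ↦ (x,y,-z,-w) -/
def tau1m : Matrix (Fin 4) (Fin 4) ℂ :=
  !![1,0,0,0; 0,1,0,0; 0,0,-1,0; 0,0,0,-1]

/-- τ₂ : (x,y,z,w) ↦ (x,-y,z,-w) -/
def tau2m : Matrix (Fin 4) (Fin 4) ℂ :=
  !![1,0,0,0; 0,-1,0,0; 0,0,1,0; 0,0,0,-1]

def sigma1 : Matrix.SpecialLinearGroup (Fin 4) ℂ :=
  ⟨sigma1m, by simp [sigma1m, Matrix.det_succ_row_zero, Fin.sum_univ_succ, Fin.succAbove]⟩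

def sigma2 : Matrix.SpecialLinearGroup (Fin 4) ℂ :=
  ⟨sigma2m, by simp [sigma2m, Matrix.det_succ_row_zero, Fin.sum_univ_succ, Fin.succAbove]⟩

def tau1 : Matrix.SpecialLinearGroup (Fin 4) ℂ :=
  ⟨tau1m, by simp [tau1m, Matrix.det_succ_row_zero, Fin.sum_univ_succ, Fin.succAbove]⟩

def tau2 : Matrix.SpecialLinearGroup (Fin 4) ℂ :=
  ⟨tau2m, by simp [tau2m, Matrix.det_succ_row_zero, Fin.sum_univ_succ, Fin.succAbove]⟩

/-- The Heisenberg group `H_{2,2}`, as a subgroup of `SL(4,ℂ)`. -/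
def H22 : Subgroup (Matrix.SpecialLinearGroup (Fin 4) ℂ) :=
  Subgroup.closure {sigma1, sigma2, tau1, tau2}


instance : Fact (Even (Fintype.card (Fin 4))) := ⟨⟨2, rfl⟩⟩

/-!
The diagonal matrices τ₁, τ₂ have sign patterns (1,1,-1,-1) and (1,-1,1,-1), which together
separate the four coordinates, so anything commuting with both is diagonal; the permutation
matrices σ₁, σ₂ act transitively on the coordinates, so anything commuting with them too is a
scalar r. Then r⁴ = det = 1, and r is real because every generator has real entries, so r = ±1.
Conversely ±1 is central in all of SL(4,ℂ).
-/

namespace Subgroup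

variable {G : Type*} [Group G]

lemma commute_of_mem_center_closure {S : Set G} {g : closure S} (hg : g ∈ center (closure S))
    {s : G} (hs : s ∈ S) : Commute (g : G) s :=
  (Subtype.ext_iff.mp (mem_center_iff.mp hg ⟨s, subset_closure hs⟩)).symm

lemma mem_center_of_coe_mem_center {H : Subgroup G} {g : H} (hg : (g : G) ∈ center G) :
    g ∈ center H :=
  mem_center_iff.mpr fun h => Subtype.ext (mem_center_iff.mp hg h)

end Subgroup

namespace Matrix

variable {n R : Type*} [Fintype n] [DecidableEq n]

lemma apply_eq_zero_of_commute_diagonal [CommRing R] [NoZeroDivisors R] {d : n → R}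
    {M : Matrix n n R} (h : Commute (diagonal d) M) {i j : n} (hij : d i ≠ d j) : M i j = 0 := by
  have hij' : (d i - d j) * M i j = 0 := by
    have := congr_fun₂ h.eq i j
    rw [diagonal_mul, mul_diagonal] at this
    linear_combination this
  exact (mul_eq_zero.mp hij').resolve_left (sub_ne_zero.mpr hij)

lemma apply_apply_eq_of_commute_permMatrix [NonAssocSemiring R] {σ : Equiv.Perm n}
    {M : Matrix n n R} (h : Commute (σ.permMatrix R) M) (i j : n) : M (σ i) (σ j) = M i j := by
  have := congr_fun₂ h.eq i (σ j)
  rwa [PEquiv.toMatrix_toPEquiv_mul, PEquiv.mul_toMatrix_toPEquiv, submatrix_apply,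
    submatrix_apply, id, id, Equiv.symm_apply_apply] at this

end Matrix

lemma sigma1m_eq_permMatrix :
    sigma1m = (Equiv.swap 0 2 * Equiv.swap 1 3 : Equiv.Perm (Fin 4)).permMatrix ℂ := by
  ext i j
  fin_cases i <;> fin_cases j <;>
    simp [sigma1m, PEquiv.toMatrix_apply, Equiv.swap_apply_of_ne_of_ne]

lemma sigma2m_eq_permMatrix :
    sigma2m = (Equiv.swap 0 1 * Equiv.swap 2 3 : Equiv.Perm (Fin 4)).permMatrix ℂ := by
  ext i j
  fin_cases i <;> fin_cases j <;>
    simp [sigma2m, PEquiv.toMatrix_apply, Equiv.swap_apply_of_ne_of_ne]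

lemma tau1m_eq_diagonal : tau1m = diagonal ![1, 1, -1, -1] := by
  ext i j
  fin_cases i <;> fin_cases j <;> simp [tau1m]

lemma tau2m_eq_diagonal : tau2m = diagonal ![1, -1, 1, -1] := by
  ext i j
  fin_cases i <;> fin_cases j <;> simp [tau2m]

lemma eq_scalar_of_commute_sigma_tau {M : Matrix (Fin 4) (Fin 4) ℂ}
    (hσ₁ : Commute sigma1m M) (hσ₂ : Commute sigma2m M) (hτ₁ : Commute tau1m M)
    (hτ₂ : Commute tau2m M) : M = scalar (Fin 4) (M 0 0) := by
  rw [sigma1m_eq_permMatrix] at hσ₁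
  rw [sigma2m_eq_permMatrix] at hσ₂
  rw [tau1m_eq_diagonal] at hτ₁
  rw [tau2m_eq_diagonal] at hτ₂
  have off_diag : ∀ i j, i ≠ j → M i j = 0 := by
    intro i j hij
    by_cases hτ₁ij : (![1, 1, -1, -1] : Fin 4 → ℂ) i = ![1, 1, -1, -1] j
    · refine apply_eq_zero_of_commute_diagonal hτ₂ ?_
      revert hij hτ₁ij
      fin_cases i <;> fin_cases j <;> norm_num
    · exact apply_eq_zero_of_commute_diagonal hτ₁ hτ₁ij
  have diag : ∀ i, M i i = M 0 0 := by
    have h₁ := apply_apply_eq_of_commute_permMatrix hσ₁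
    have h₂ := apply_apply_eq_of_commute_permMatrix hσ₂
    intro i
    fin_cases i
    · rfl
    · simpa [Equiv.swap_apply_of_ne_of_ne] using h₂ 0 0
    · simpa [Equiv.swap_apply_of_ne_of_ne] using h₁ 0 0
    · simpa [← h₂ 0 0, Equiv.swap_apply_of_ne_of_ne] using h₁ 1 1
  ext i j
  by_cases hij : i = j
  · subst hij
    simp [diag]
  · simp [off_diag i j hij, hij]

lemma H22_le_eqLocus_map_conj :
    H22 ≤ MonoidHom.eqLocus (SpecialLinearGroup.map (starRingEnd ℂ)) (MonoidHom.id _) := by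
  rw [H22, Subgroup.closure_le]
  rintro x (rfl | rfl | rfl | rfl) <;>
  · refine Subtype.ext ?_
    rw [SpecialLinearGroup.map_apply_coe, MonoidHom.id_apply]
    ext i j
    fin_cases i <;> fin_cases j <;>
      simp [sigma1, sigma2, tau1, tau2, sigma1m, sigma2m, tau1m, tau2m]

lemma Complex.eq_one_or_eq_neg_one_of_conj_eq_of_pow_eq_one {z : ℂ} {n : ℕ} (hn : n ≠ 0)
    (hconj : starRingEnd ℂ z = z) (hz : z ^ n = 1) : z = 1 ∨ z = -1 := by
  obtain ⟨r, rfl⟩ := Complex.conj_eq_iff_real.mp hconj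
  have hr : r ^ n = 1 := by exact_mod_cast hz
  rcases pow_eq_one_iff_cases.mp hr with h | rfl | ⟨rfl, -⟩
  · exact absurd h hn
  · simp
  · simp

/-- The center of `H_{2,2}` equals `{1, -1}`. -/
theorem H22_center (g : H22) :
    g ∈ Subgroup.center H22 ↔
      (g : Matrix.SpecialLinearGroup (Fin 4) ℂ) = 1 ∨
      (g : Matrix.SpecialLinearGroup (Fin 4) ℂ) = -1 := by
  constructor
  · intro hg
    have commute_gen : ∀ s ∈ ({sigma1, sigma2, tau1, tau2} : Set (SpecialLinearGroup (Fin 4) ℂ)),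
        Commute (s : Matrix (Fin 4) (Fin 4) ℂ) (g : SpecialLinearGroup (Fin 4) ℂ) := fun s hs =>
      ((Subgroup.commute_of_mem_center_closure hg hs).symm.map SpecialLinearGroup.coeMonoidHom :)
    have hM := eq_scalar_of_commute_sigma_tau
      (commute_gen sigma1 (by simp)) (commute_gen sigma2 (by simp))
      (commute_gen tau1 (by simp)) (commute_gen tau2 (by simp))
    set r := ((g : SpecialLinearGroup (Fin 4) ℂ) : Matrix (Fin 4) (Fin 4) ℂ) 0 0
    have hdet : r ^ 4 = 1 := by
      simpa [hM] using (g : SpecialLinearGroup (Fin 4) ℂ).det_coe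
    have hreal : starRingEnd ℂ r = r :=
      congr_fun₂ (congrArg Subtype.val (H22_le_eqLocus_map_conj g.2)) 0 0
    rcases Complex.eq_one_or_eq_neg_one_of_conj_eq_of_pow_eq_one four_ne_zero hreal hdet with h | h
    · exact Or.inl (Subtype.ext (hM.trans (by simp [h, -scalar_apply])))
    · exact Or.inr (Subtype.ext (hM.trans (by simp [h, -scalar_apply])))
  · rintro (h | h) <;> refine Subgroup.mem_center_of_coe_mem_center ?_ <;> rw [h]
    · exact Subgroup.one_mem _
    · exact Matrix.SpecialLinearGroup.mem_center_iff.mpr ⟨-1, by norm_num, by simp [-scalar_apply]⟩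
end

section
/- The commutator subgroup of H_{2,2} equals {1, -1}. -/
open Matrix

/-!
Every generator of `H_{2,2}` commutes with every other one up to the central sign `-1`
(`σ₁` anticommutes with `τ₁`, `σ₂` with `τ₂`, all other pairs commute). Commutators with values
in a central subgroup are bimultiplicative, so this persists on the whole group generated, giving
`[H_{2,2}, H_{2,2}] ≤ {1, -1}`; conversely `-1 = [σ₁, τ₁]`.
-/

open scoped commutatorElement

section CentralCommutators

open Subgroup

variable {G : Type*} [Group G] {Z : Subgroup G}

theorem conj_eq_self_of_mem_center {z : G} (hz : z ∈ center G) (x : G) : x * z * x⁻¹ = z := by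
  rw [mem_center_iff.1 hz x, mul_inv_cancel_right]

theorem commutatorElement_mem_of_mem_closure (hZ : Z ≤ center G) {S : Set G}
    (hS : ∀ a ∈ S, ∀ b ∈ S, ⁅a, b⁆ ∈ Z) {a b : G} (ha : a ∈ closure S) (hb : b ∈ closure S) :
    ⁅a, b⁆ ∈ Z := by
  have conj {z : G} (hz : z ∈ Z) (x : G) : x * z * x⁻¹ = z := conj_eq_self_of_mem_center (hZ hz) x
  induction ha, hb using closure_induction₂ with
  | mem x y hx hy => exact hS x hx y hy
  | one_left => simp
  | one_right => simp
  | mul_left x y z _ _ _ hxz hyz =>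
    rw [commutatorElement_mul_left_eq_conj_mul, conj hyz]
    exact mul_mem hyz hxz
  | mul_right x y z _ _ _ hzx hzy =>
    rw [commutatorElement_mul_right_eq_mul_conj, mul_assoc _ x, mul_assoc ⁅z, x⁆, conj hzy]
    exact mul_mem hzx hzy
  | inv_left x y _ _ hxy =>
    have h := conj (inv_mem hxy) x⁻¹
    rw [inv_inv, commutatorElement_inv] at h
    rw [commutatorElement_inv_left, h, ← commutatorElement_inv]
    exact inv_mem hxy
  | inv_right x y _ _ hxy =>
    have h := conj (inv_mem hxy) y⁻¹
    rw [inv_inv, commutatorElement_inv] at h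
    rw [commutatorElement_inv_right, h, ← commutatorElement_inv]
    exact inv_mem hxy

theorem commutator_closure_le (hZ : Z ≤ center G) {S : Set G}
    (hS : ∀ a ∈ S, ∀ b ∈ S, ⁅a, b⁆ ∈ Z) : ⁅closure S, closure S⁆ ≤ Z :=
  commutator_le.2 fun _ ha _ hb => commutatorElement_mem_of_mem_closure hZ hS ha hb

end CentralCommutators

section SignSubgroup

open Subgroup

variable (G : Type*) [Group G] [HasDistribNeg G]

def signSubgroup : Subgroup G where
  carrier := {1, -1}
  one_mem' := Set.mem_insert _ _
  mul_mem' := by rintro _ _ (rfl | rfl) (rfl | rfl) <;> simp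
  inv_mem' := by
    rintro _ (rfl | rfl)
    · simp
    · exact Or.inr (inv_eq_of_mul_eq_one_right (by simp))

variable {G}

theorem mem_signSubgroup {g : G} : g ∈ signSubgroup G ↔ g = 1 ∨ g = -1 := Iff.rfl

theorem signSubgroup_le_center : signSubgroup G ≤ center G := by
  rintro _ (rfl | rfl) <;> simp [mem_center_iff]

theorem commutatorElement_eq_neg_one {a b : G} (h : a * b = -(b * a)) : ⁅a, b⁆ = -1 := by
  rw [commutatorElement_def, h, neg_mul, neg_mul, mul_inv_cancel_right, mul_inv_cancel]

theorem commutatorElement_mem_signSubgroup {a b : G} (h : a * b = b * a ∨ a * b = -(b * a)) :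
    ⁅a, b⁆ ∈ signSubgroup G := by
  rcases h with h | h
  · exact Or.inl (commutatorElement_eq_one_iff_mul_comm.2 h)
  · exact Or.inr (commutatorElement_eq_neg_one h)

end SignSubgroup

theorem Matrix.SpecialLinearGroup.coe_injective {n R : Type*} [Fintype n] [DecidableEq n]
    [CommRing R] : Function.Injective ((↑) : SpecialLinearGroup n R → Matrix n n R) :=
  Subtype.val_injective

abbrev SL4 := Matrix.SpecialLinearGroup (Fin 4) ℂ

section Generators

open Subgroup

theorem sigma1_mul_sigma2 : sigma1 * sigma2 = sigma2 * sigma1 :=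
  SpecialLinearGroup.coe_injective <| by
    simp only [Matrix.SpecialLinearGroup.coe_mul]
    simp [sigma1, sigma2, sigma1m, sigma2m]

theorem tau1_mul_tau2 : tau1 * tau2 = tau2 * tau1 :=
  SpecialLinearGroup.coe_injective <| by
    simp only [Matrix.SpecialLinearGroup.coe_mul]
    simp [tau1, tau2, tau1m, tau2m]

theorem sigma1_mul_tau1 : sigma1 * tau1 = -(tau1 * sigma1) :=
  SpecialLinearGroup.coe_injective <| by
    simp only [Matrix.SpecialLinearGroup.coe_mul, Matrix.SpecialLinearGroup.coe_neg]
    simp [sigma1, tau1, sigma1m, tau1m]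

theorem sigma1_mul_tau2 : sigma1 * tau2 = tau2 * sigma1 :=
  SpecialLinearGroup.coe_injective <| by
    simp only [Matrix.SpecialLinearGroup.coe_mul]
    simp [sigma1, tau2, sigma1m, tau2m]

theorem sigma2_mul_tau1 : sigma2 * tau1 = tau1 * sigma2 :=
  SpecialLinearGroup.coe_injective <| by
    simp only [Matrix.SpecialLinearGroup.coe_mul]
    simp [sigma2, tau1, sigma2m, tau1m]

theorem sigma2_mul_tau2 : sigma2 * tau2 = -(tau2 * sigma2) :=
  SpecialLinearGroup.coe_injective <| by
    simp only [Matrix.SpecialLinearGroup.coe_mul, Matrix.SpecialLinearGroup.coe_neg]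
    simp [sigma2, tau2, sigma2m, tau2m]

theorem commutatorElement_generators_mem_signSubgroup :
    ∀ a ∈ ({sigma1, sigma2, tau1, tau2} : Set SL4), ∀ b ∈ ({sigma1, sigma2, tau1, tau2} : Set SL4),
      ⁅a, b⁆ ∈ signSubgroup SL4 := by
  have swap {a b : SL4} (h : ⁅b, a⁆ ∈ signSubgroup SL4) : ⁅a, b⁆ ∈ signSubgroup SL4 :=
    commutatorElement_inv b a ▸ inv_mem h
  have := commutatorElement_mem_signSubgroup (.inl sigma1_mul_sigma2)
  have := commutatorElement_mem_signSubgroup (.inl tau1_mul_tau2)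
  have := commutatorElement_mem_signSubgroup (.inr sigma1_mul_tau1)
  have := commutatorElement_mem_signSubgroup (.inl sigma1_mul_tau2)
  have := commutatorElement_mem_signSubgroup (.inl sigma2_mul_tau1)
  have := commutatorElement_mem_signSubgroup (.inr sigma2_mul_tau2)
  rintro a (rfl | rfl | rfl | rfl) b (rfl | rfl | rfl | rfl) <;>
    first
    | rw [commutatorElement_self]; exact one_mem _
    -- at default transparency the unifier would compare the generators' matrices entrywise
    | with_reducible assumption
    | exact swap (by with_reducible assumption)

theorem commutator_H22 : ⁅H22, H22⁆ = signSubgroup SL4 := by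
  refine le_antisymm
    (commutator_closure_le signSubgroup_le_center commutatorElement_generators_mem_signSubgroup) ?_
  rintro _ (rfl | rfl)
  · exact one_mem _
  · rw [← commutatorElement_eq_neg_one sigma1_mul_tau1]
    exact commutator_mem_commutator (subset_closure (by simp)) (subset_closure (by simp))

end Generators

/-- The commutator subgroup of `H_{2,2}` equals `{1, -1}`. -/
theorem H22_commutator (g : H22) :
    g ∈ commutator H22 ↔
      (g : Matrix.SpecialLinearGroup (Fin 4) ℂ) = 1 ∨
      (g : Matrix.SpecialLinearGroup (Fin 4) ℂ) = -1 := by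
  rw [← Subgroup.mem_map_iff_mem H22.subtype_injective, Subgroup.map_subtype_commutator,
    commutator_H22]
  exact mem_signSubgroup
end

section
/- The symplectic group Sp(4,𝔽₂) is isomorphic to the symmetric group S₆ on 6 letters. -/
/-!
Permuting coordinates, `S₆` acts on `𝔽₂⁶` preserving the dot product. The even-weight vectors
modulo the all-ones vector form a 4-dimensional space on which the dot product induces a
nondegenerate alternating form, so this gives an injective homomorphism `S₆ → Sp(4,𝔽₂)`.
Conversely, `Sp(4,𝔽₂)` permutes faithfully the six quadratic forms of Arf invariant one that
polarize to the symplectic form, so `|Sp(4,𝔽₂)| ≤ 6!` and the homomorphism is an isomorphism.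
-/

open Matrix Equiv

lemma Matrix.vecMulVec_zero' {R m n : Type*} [MulZeroClass R] (w : m → R) :
    vecMulVec w (0 : n → R) = 0 := by
  ext; simp [vecMulVec_apply]

section ReducedPermMatrix

variable {R n ι : Type*} [CommRing R] [Fintype n] [DecidableEq n]

/-- If `A *ᵥ 1 = 0`, `1 ᵥ* S = 0`, `A * S = 1` and `S * A = 1 + vecMulVec 1 u + vecMulVec v 1`,
the columns of `S` lift a basis of `⟨1⟩ᗮ / ⟨1⟩` and `A` reads off coordinates in it; this is then
the matrix of `σ` acting on that subquotient of the permutation module. -/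
def reducedPermMatrix (A : Matrix ι n R) (S : Matrix n ι R) (σ : Perm n) : Matrix ι ι R :=
  A * σ⁻¹.permMatrix R * S

lemma Matrix.permMatrix_mulVec_one (σ : Perm n) : σ.permMatrix R *ᵥ 1 = 1 := by
  rw [permMatrix_mulVec]; rfl

lemma Matrix.one_vecMul_permMatrix (σ : Perm n) : 1 ᵥ* σ.permMatrix R = 1 := by
  rw [vecMul_permMatrix]; rfl

variable {A : Matrix ι n R} {S : Matrix n ι R} {u v : n → R}

lemma reducedPermMatrix_one [DecidableEq ι] (hAS : A * S = 1) : reducedPermMatrix A S 1 = 1 := by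
  simp [reducedPermMatrix, hAS]

lemma reducedPermMatrix_mul [Fintype ι] [DecidableEq ι] (hA : A *ᵥ 1 = 0) (hS : 1 ᵥ* S = 0)
    (hSA : S * A = 1 + vecMulVec 1 u + vecMulVec v 1) (σ τ : Perm n) :
    reducedPermMatrix A S (σ * τ) = reducedPermMatrix A S σ * reducedPermMatrix A S τ := by
  set P := σ⁻¹.permMatrix R
  set Q := τ⁻¹.permMatrix R
  have hAP : A * P * vecMulVec (1 : n → R) u = 0 := by
    rw [mul_vecMulVec, ← mulVec_mulVec, permMatrix_mulVec_one, hA, zero_vecMulVec]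
  have hQS : vecMulVec v (1 : n → R) * (Q * S) = 0 := by
    rw [vecMulVec_mul, ← vecMul_vecMul, one_vecMul_permMatrix, hS, vecMulVec_zero']
  symm
  calc reducedPermMatrix A S σ * reducedPermMatrix A S τ
      = A * P * (1 + vecMulVec (1 : n → R) u + vecMulVec v 1) * (Q * S) := by
        simp only [reducedPermMatrix, P, Q, ← hSA, Matrix.mul_assoc]
    _ = A * P * (Q * S) + A * P * vecMulVec (1 : n → R) u * (Q * S)
          + A * P * (vecMulVec v (1 : n → R) * (Q * S)) := by
        simp only [Matrix.mul_add, Matrix.add_mul, Matrix.mul_one, Matrix.mul_assoc]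
    _ = reducedPermMatrix A S (σ * τ) := by
        rw [hAP, hQS, Matrix.zero_mul, Matrix.mul_zero, add_zero, add_zero]
        simp only [reducedPermMatrix, _root_.mul_inv_rev, permMatrix_mul, P, Q, Matrix.mul_assoc]

lemma mul_reducedPermMatrix [Fintype ι] (hS : 1 ᵥ* S = 0)
    (hSA : S * A = 1 + vecMulVec 1 u + vecMulVec v 1) (σ : Perm n) :
    S * reducedPermMatrix A S σ
      = σ⁻¹.permMatrix R * S + vecMulVec 1 (u ᵥ* (σ⁻¹.permMatrix R * S)) := by
  have hPS : (1 : n → R) ᵥ* (σ⁻¹.permMatrix R * S) = 0 := by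
    rw [← vecMul_vecMul, one_vecMul_permMatrix, hS]
  rw [reducedPermMatrix, ← Matrix.mul_assoc, ← Matrix.mul_assoc, hSA, Matrix.mul_assoc,
    Matrix.add_mul, Matrix.add_mul, vecMulVec_mul, vecMulVec_mul, hPS, vecMulVec_zero',
    Matrix.one_mul, add_zero]

lemma reducedPermMatrix_transpose_mul_gram [Fintype ι] (hS : 1 ᵥ* S = 0)
    (hSA : S * A = 1 + vecMulVec 1 u + vecMulVec v 1) (hn : (Fintype.card n : R) = 0)
    (σ : Perm n) :
    (reducedPermMatrix A S σ)ᵀ * (Sᵀ * S) * reducedPermMatrix A S σ = Sᵀ * S := by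
  have hSM := mul_reducedPermMatrix hS hSA σ
  have hP1 : 1 ᵥ* (σ⁻¹.permMatrix R * S) = 0 := by
    rw [← vecMul_vecMul, one_vecMul_permMatrix, hS]
  have hPP : (σ⁻¹.permMatrix R)ᵀ * σ⁻¹.permMatrix R = 1 := by
    rw [transpose_permMatrix, ← permMatrix_mul, mul_inv_cancel, permMatrix_one]
  calc (reducedPermMatrix A S σ)ᵀ * (Sᵀ * S) * reducedPermMatrix A S σ
      = (S * reducedPermMatrix A S σ)ᵀ * (S * reducedPermMatrix A S σ) := by
        simp only [transpose_mul, Matrix.mul_assoc]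
    _ = Sᵀ * S := by
      rw [hSM]
      generalize σ⁻¹.permMatrix R = P at hP1 hPP
      generalize u ᵥ* (P * S) = w
      rw [transpose_add, transpose_vecMulVec, Matrix.add_mul, Matrix.mul_add, Matrix.mul_add,
        vecMulVec_mul, hP1, mul_vecMulVec, mulVec_transpose, hP1, vecMulVec_mul_vecMulVec,
        one_dotProduct_one, hn, zero_smul, transpose_mul, Matrix.mul_assoc,
        ← Matrix.mul_assoc Pᵀ, hPP, Matrix.one_mul, zero_vecMulVec, vecMulVec_zero, add_zero,
        add_zero, add_zero]

lemma reducedPermMatrix_mem_symplecticGroup {l : Type*} [Fintype l] [DecidableEq l]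
    {A : Matrix (l ⊕ l) n R} {S : Matrix n (l ⊕ l) R} (hS : 1 ᵥ* S = 0)
    (hSA : S * A = 1 + vecMulVec 1 u + vecMulVec v 1) (hn : (Fintype.card n : R) = 0)
    (hJ : Sᵀ * S = J l R) (σ : Perm n) :
    reducedPermMatrix A S σ ∈ symplecticGroup l R := by
  rw [SymplecticGroup.mem_iff', ← hJ]
  exact reducedPermMatrix_transpose_mul_gram hS hSA hn σ

lemma exists_translate_of_reducedPermMatrix_eq_one [Fintype ι] [DecidableEq ι] {σ : Perm n}
    (hS : 1 ᵥ* S = 0) (hSA : S * A = 1 + vecMulVec 1 u + vecMulVec v 1)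
    (h : reducedPermMatrix A S σ = 1) : ∃ c, ∀ i, S i = S (σ⁻¹ i) + c := by
  have hSM := mul_reducedPermMatrix hS hSA σ
  rw [h, Matrix.mul_one, Perm.permMatrix, PEquiv.toMatrix_toPEquiv_mul] at hSM
  exact ⟨_, fun i => funext fun j => by simpa using congrFun (congrFun hSM i) j⟩

end ReducedPermMatrix

attribute [local instance] arrowAction

section QuadraticRefinements

variable {l : Type*} [Fintype l] [DecidableEq l]

def symplecticForm {R : Type*} [CommRing R] (x y : l ⊕ l → R) : R := x ⬝ᵥ J l R *ᵥ y

lemma symplecticForm_smul {R : Type*} [CommRing R] (g : symplecticGroup l R) (x y : l ⊕ l → R) :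
    symplecticForm (g • x) (g • y) = symplecticForm x y := by
  have hg := (SymplecticGroup.mem_iff' (A := (g : Matrix (l ⊕ l) (l ⊕ l) R))).mp g.2
  change (g : Matrix _ _ R) *ᵥ x ⬝ᵥ J l R *ᵥ ((g : Matrix _ _ R) *ᵥ y) = x ⬝ᵥ J l R *ᵥ y
  rw [← vecMul_transpose, mulVec_mulVec, ← dotProduct_mulVec, mulVec_mulVec, ← Matrix.mul_assoc,
    hg]

def IsQuadraticRefinement (q : (l ⊕ l → ZMod 2) → ZMod 2) : Prop :=
  ∀ x y, q (x + y) = q x + q y + symplecticForm x y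

def standardRefinement (v : l ⊕ l → ZMod 2) : ZMod 2 := ∑ i, v (.inl i) * v (.inr i)

lemma isQuadraticRefinement_standardRefinement :
    IsQuadraticRefinement (standardRefinement (l := l)) := by
  intro x y
  simp only [standardRefinement, Pi.add_apply, symplecticForm, dotProduct, mulVec, J, fromBlocks,
    of_apply, Fintype.sum_sum_type, Sum.elim_inl, Sum.elim_inr, Matrix.zero_apply, zero_mul,
    Matrix.neg_apply, Matrix.one_apply, ZMod.neg_eq_self_mod_two, ite_mul,
    one_mul, Finset.sum_ite_eq, Finset.mem_univ, ↓reduceIte, zero_add, add_zero,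
    ← Finset.sum_add_distrib]
  exact Finset.sum_congr rfl fun i _ => by ring

lemma eq_dotProduct_of_map_add {ι : Type*} [Fintype ι] [DecidableEq ι] {p : ℕ}
    (f : (ι → ZMod p) → ZMod p) (hf : ∀ x y, f (x + y) = f x + f y) (x : ι → ZMod p) :
    f x = (fun i => f (Pi.single i 1)) ⬝ᵥ x := by
  let φ : Module.Dual (ZMod p) (ι → ZMod p) := (AddMonoidHom.mk' f hf).toZModLinearMap p
  have := LinearMap.congr_fun ((dotProductEquiv (ZMod p) ι).apply_symm_apply φ) x
  simpa [dotProductEquiv, φ, dotProduct_comm] using this.symm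

lemma IsQuadraticRefinement.eq_standardRefinement_add {q : (l ⊕ l → ZMod 2) → ZMod 2}
    (hq : IsQuadraticRefinement q) :
    ∃ c, q = fun v => standardRefinement v + c ⬝ᵥ v := by
  set f := fun v => q v - standardRefinement v
  have hf : ∀ x y, f (x + y) = f x + f y := by
    intro x y
    simp only [f, hq x y, isQuadraticRefinement_standardRefinement x y]
    ring
  exact ⟨_, funext fun v => by rw [← eq_dotProduct_of_map_add f hf v, add_sub_cancel]⟩

lemma isQuadraticRefinement_standardRefinement_add (c : l ⊕ l → ZMod 2) :
    IsQuadraticRefinement fun v => standardRefinement v + c ⬝ᵥ v := by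
  intro x y
  dsimp only
  rw [isQuadraticRefinement_standardRefinement x y, dotProduct_add]
  ring

lemma IsQuadraticRefinement.comp_smul {q : (l ⊕ l → ZMod 2) → ZMod 2}
    (hq : IsQuadraticRefinement q) (g : symplecticGroup l (ZMod 2)) :
    IsQuadraticRefinement fun v => q (g • v) := by
  intro x y
  dsimp only
  rw [smul_add, hq, symplecticForm_smul]

/-- Arf invariant one: a nondegenerate quadratic form over `𝔽₂` takes its Arf invariant as its
majority value. -/
def IsOddQuadratic {V : Type*} [Fintype V] (q : V → ZMod 2) : Prop :=
  Fintype.card {v // q v = 0} < Fintype.card {v // q v = 1}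

instance {V : Type*} [Fintype V] (q : V → ZMod 2) : Decidable (IsOddQuadratic q) :=
  Nat.decLt _ _

lemma isOddQuadratic_comp_equiv {V W : Type*} [Fintype V] [Fintype W] (q : W → ZMod 2)
    (e : V ≃ W) : IsOddQuadratic (q ∘ e) ↔ IsOddQuadratic q := by
  simp only [IsOddQuadratic, Function.comp_apply]
  rw [Fintype.card_congr (e.subtypeEquiv (q := fun w => q w = 0) fun _ => Iff.rfl),
    Fintype.card_congr (e.subtypeEquiv (q := fun w => q w = 1) fun _ => Iff.rfl)]

variable (l) in
def oddRefinements : SubMulAction (symplecticGroup l (ZMod 2)) ((l ⊕ l → ZMod 2) → ZMod 2) where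
  carrier := {q | IsQuadraticRefinement q ∧ IsOddQuadratic q}
  smul_mem' g _ hq :=
    ⟨hq.1.comp_smul g⁻¹, (isOddQuadratic_comp_equiv _ (MulAction.toPerm g⁻¹)).2 hq.2⟩

end QuadraticRefinements

section Sp4

local notation "𝔽₂⁴" => Fin 2 ⊕ Fin 2 → ZMod 2

lemma card_isOddQuadratic_standardRefinement_add :
    Nat.card {c : 𝔽₂⁴ // IsOddQuadratic fun v => standardRefinement v + c ⬝ᵥ v} = 6 := by
  rw [Nat.card_eq_fintype_card]
  decide

lemma eq_zero_of_forall_isOddQuadratic_dotProduct_eq (w : 𝔽₂⁴)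
    (hw : ∀ c c' : 𝔽₂⁴, IsOddQuadratic (fun v => standardRefinement v + c ⬝ᵥ v) →
      IsOddQuadratic (fun v => standardRefinement v + c' ⬝ᵥ v) → c ⬝ᵥ w = c' ⬝ᵥ w) :
    w = 0 := by
  revert w
  decide

lemma card_oddRefinements_le : Nat.card (oddRefinements (Fin 2)) ≤ 6 := by
  rw [← card_isOddQuadratic_standardRefinement_add]
  refine Nat.card_le_card_of_surjective
    (fun c => ⟨_, isQuadraticRefinement_standardRefinement_add c.1, c.2⟩) ?_
  rintro ⟨q, hq, hodd⟩
  obtain ⟨c, rfl⟩ := hq.eq_standardRefinement_add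
  exact ⟨⟨c, hodd⟩, rfl⟩

lemma toPermHom_oddRefinements_injective :
    Function.Injective (MulAction.toPermHom (symplecticGroup (Fin 2) (ZMod 2))
      (oddRefinements (Fin 2))) := by
  rw [injective_iff_map_eq_one]
  intro g hg
  have hinv : ∀ c : 𝔽₂⁴, IsOddQuadratic (fun v => standardRefinement v + c ⬝ᵥ v) → ∀ v,
      standardRefinement (g⁻¹ • v) + c ⬝ᵥ (g⁻¹ • v) = standardRefinement v + c ⬝ᵥ v := by
    intro c hc v
    have h := DFunLike.congr_fun hg ⟨_, isQuadraticRefinement_standardRefinement_add c, hc⟩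
    exact congrFun (congrArg Subtype.val h) v
  -- Two odd refinements differ by a linear form `(c - c') ⬝ᵥ ·`, which `g` must also fix.
  have hfix : ∀ v : 𝔽₂⁴, g⁻¹ • v = v := by
    intro v
    rw [← sub_eq_zero]
    refine eq_zero_of_forall_isOddQuadratic_dotProduct_eq _ fun c c' hc hc' => ?_
    rw [dotProduct_sub, dotProduct_sub]
    linear_combination hinv c hc v - hinv c' hc' v
  rw [← inv_eq_one]
  exact Subtype.ext (ext_iff_mulVec.mpr fun v => (hfix v).trans (one_mulVec v).symm)

end Sp4

section S6

/-- The columns `{0,1}, {3,4}, {1,2}, {4,5}` lift a symplectic basis of the even-weight vectors of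
`𝔽₂⁶` modulo the all-ones vector, for the dot product. -/
def evenSymplecticBasis : Matrix (Fin 6) (Fin 2 ⊕ Fin 2) (ZMod 2) :=
  fromCols !![1, 0; 1, 0; 0, 0; 0, 1; 0, 1; 0, 0] !![0, 0; 1, 0; 1, 0; 0, 0; 0, 1; 0, 1]

def evenSymplecticCoords : Matrix (Fin 2 ⊕ Fin 2) (Fin 6) (ZMod 2) :=
  J (Fin 2) (ZMod 2) * evenSymplecticBasisᵀ

lemma evenSymplecticCoords_mul_basis : evenSymplecticCoords * evenSymplecticBasis = 1 := by
  decide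

lemma evenSymplecticCoords_mulVec_one : evenSymplecticCoords *ᵥ 1 = 0 := by decide

lemma one_vecMul_evenSymplecticBasis : 1 ᵥ* evenSymplecticBasis = 0 := by decide

lemma evenSymplecticBasis_mul_coords :
    evenSymplecticBasis * evenSymplecticCoords
      = 1 + vecMulVec 1 ![0, 0, 0, 1, 1, 1] + vecMulVec ![1, 1, 1, 0, 0, 0] 1 := by
  decide

lemma evenSymplecticBasis_transpose_mul_self :
    evenSymplecticBasisᵀ * evenSymplecticBasis = J (Fin 2) (ZMod 2) := by
  decide

lemma evenSymplecticBasis_row_injective :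
    ∀ i j, evenSymplecticBasis.row i = evenSymplecticBasis.row j → i = j := by
  decide

lemma eq_zero_of_evenSymplecticBasis_rows_translate (c : Fin 2 ⊕ Fin 2 → ZMod 2)
    (hc : ∀ i, ∃ j, evenSymplecticBasis i = evenSymplecticBasis j + c) : c = 0 := by
  revert c
  decide

def permToSymplectic : Perm (Fin 6) →* symplecticGroup (Fin 2) (ZMod 2) where
  toFun σ := ⟨reducedPermMatrix evenSymplecticCoords evenSymplecticBasis σ,
    reducedPermMatrix_mem_symplecticGroup one_vecMul_evenSymplecticBasis
      evenSymplecticBasis_mul_coords (by decide) evenSymplecticBasis_transpose_mul_self σ⟩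
  map_one' := Subtype.ext (reducedPermMatrix_one evenSymplecticCoords_mul_basis)
  map_mul' σ τ := Subtype.ext (reducedPermMatrix_mul evenSymplecticCoords_mulVec_one
    one_vecMul_evenSymplecticBasis evenSymplecticBasis_mul_coords σ τ)

lemma permToSymplectic_injective : Function.Injective permToSymplectic := by
  rw [injective_iff_map_eq_one]
  intro σ hσ
  obtain ⟨c, hc⟩ := exists_translate_of_reducedPermMatrix_eq_one one_vecMul_evenSymplecticBasis
    evenSymplecticBasis_mul_coords (congrArg Subtype.val hσ)
  obtain rfl := eq_zero_of_evenSymplecticBasis_rows_translate c fun i => ⟨_, hc i⟩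
  rw [← inv_eq_one]
  refine Equiv.ext fun i => evenSymplecticBasis_row_injective _ _ ?_
  simpa [Matrix.row] using (hc i).symm

end S6

/-- The symplectic group `Sp(4,𝔽₂)` is isomorphic to the symmetric group `S₆`. -/
theorem sp4_f2_iso_s6 :
    Nonempty (Matrix.symplecticGroup (Fin 2) (ZMod 2) ≃* Equiv.Perm (Fin 6)) := by
  have hle : Nat.card (symplecticGroup (Fin 2) (ZMod 2)) ≤ Nat.card (Perm (Fin 6)) :=
    calc Nat.card (symplecticGroup (Fin 2) (ZMod 2))
        ≤ Nat.card (Perm (oddRefinements (Fin 2))) :=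
          Nat.card_le_card_of_injective _ toPermHom_oddRefinements_injective
      _ = Nat.factorial (Nat.card (oddRefinements (Fin 2))) := Nat.card_perm
      _ ≤ Nat.factorial 6 := Nat.factorial_le card_oddRefinements_le
      _ = Nat.card (Perm (Fin 6)) := by rw [Nat.card_perm, Nat.card_fin]
  exact ⟨(MulEquiv.ofBijective permToSymplectic
    (permToSymplectic_injective.bijective_of_nat_card_le hle)).symm⟩
end
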